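/- arXiv:2602.08538 — 2 statements merged into one kernel-verified Lean document; each statement's English description precedes it below -/
import Mathlib

section
/- Let E be a finite-dimensional real inner product space, K ≥ 0 an integer, and J : (Fin (K+1) → E) → ℝ continuously differentiable, bounded below, with L_k-Lipschitz partial gradient in each block k (uniformly in the other blocks), and step sizes 0 < η_k ≤ 1/L_k. Let {X^{(ℓ)}}_{ℓ≥0} be the backward Gauss–Seidel sweep iterates: x_k^{(ℓ)} = x_k^{(ℓ−1)} − η_k ∇_{x_k} J(x_0^{(ℓ−1)}, …, x_k^{(ℓ−1)}, x_{k+1}^{(ℓ)}, …, x_K^{(ℓ)}) for k = K down to 0. Then every accumulation point X̄ of the sequence {X^{(ℓ)}} is a first-order stationary point of J, i.e. the total gradient satisfies ∇J(X̄) = 0. -/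
open Filter Topology
open scoped RealInnerProductSpace

/-- The partial gradient of `J` with respect to the `k`-th block, the other blocks being
fixed to the values given by `Y` (and the gradient being taken at `Y k`). -/
noncomputable def blockGrad {E : Type*} [NormedAddCommGroup E] [InnerProductSpace ℝ E]
    [CompleteSpace E] {K : ℕ} (J : (Fin (K + 1) → E) → ℝ)
    (Y : Fin (K + 1) → E) (k : Fin (K + 1)) : E :=
  gradient (fun u => J (Function.update Y k u)) (Y k)

set_option linter.unusedSectionVars false

lemma smooth_descent {E : Type*} [NormedAddCommGroup E] [InnerProductSpace ℝ E]
    [CompleteSpace E] (f : E → ℝ) (g : E → E) (hg : ∀ p, HasGradientAt f (g p) p)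
    {L : ℝ} (hL : 0 ≤ L) (hlip : ∀ u v, ‖g u - g v‖ ≤ L * ‖u - v‖)
    (x y : E) : f y ≤ f x + ⟪g x, y - x⟫ + L / 2 * ‖y - x‖ ^ 2 := by
  set v := y - x with hv
  have hgc : Continuous g := by
    refine (LipschitzWith.of_dist_le_mul (K := Real.toNNReal L) fun u w => ?_).continuous
    rw [dist_eq_norm, dist_eq_norm, Real.coe_toNNReal L hL]
    exact hlip u w
  have hline : ∀ t : ℝ, HasDerivAt (fun t : ℝ => x + t • v) v t := fun t => by
    simpa using ((hasDerivAt_id t).smul_const v).const_add x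
  have hcomp : ∀ t : ℝ, HasDerivAt (fun t => f (x + t • v)) (⟪g (x + t • v), v⟫) t := by
    intro t
    have h1 := (hg (x + t • v)).hasFDerivAt.comp_hasDerivAt t (hline t)
    simpa [InnerProductSpace.toDual_apply_apply, Function.comp_def] using h1
  have hcont : Continuous fun t : ℝ => (⟪g (x + t • v), v⟫ : ℝ) :=
    Continuous.inner (hgc.comp (by continuity)) continuous_const
  have hint : ∫ t in (0:ℝ)..1, ⟪g (x + t • v), v⟫ = f y - f x := by
    have := intervalIntegral.integral_eq_sub_of_hasDerivAt (f := fun t => f (x + t • v))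
      (fun t _ => hcomp t) (hcont.intervalIntegrable 0 1)
    simpa [hv] using this
  have key : ∫ t in (0:ℝ)..1, (⟪g (x + t • v), v⟫ - ⟪g x, v⟫ : ℝ)
      ≤ ∫ t in (0:ℝ)..1, L * ‖v‖ ^ 2 * t := by
    refine intervalIntegral.integral_mono_on (by norm_num)
      ((hcont.sub continuous_const).intervalIntegrable 0 1)
      ((Continuous.mul continuous_const continuous_id).intervalIntegrable 0 1) ?_
    intro t ht
    rw [show (⟪g (x + t • v), v⟫ - ⟪g x, v⟫ : ℝ) = ⟪g (x + t • v) - g x, v⟫ by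
      rw [inner_sub_left]]
    calc (⟪g (x + t • v) - g x, v⟫ : ℝ) ≤ ‖g (x + t • v) - g x‖ * ‖v‖ :=
          real_inner_le_norm _ _
      _ ≤ (L * ‖(x + t • v) - x‖) * ‖v‖ :=
          mul_le_mul_of_nonneg_right (hlip _ _) (norm_nonneg _)
      _ = L * ‖v‖ ^ 2 * t := by
          rw [add_sub_cancel_left, norm_smul, Real.norm_eq_abs, abs_of_nonneg ht.1]
          ring
  have hsub : ∫ t in (0:ℝ)..1, (⟪g (x + t • v), v⟫ - ⟪g x, v⟫ : ℝ)
      = (f y - f x) - ⟪g x, v⟫ := by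
    rw [intervalIntegral.integral_sub (hcont.intervalIntegrable 0 1)
      (intervalIntegrable_const), hint, intervalIntegral.integral_const]
    simp
  have hrhs : ∫ t in (0:ℝ)..1, L * ‖v‖ ^ 2 * t = L / 2 * ‖v‖ ^ 2 := by
    rw [intervalIntegral.integral_const_mul, integral_id]
    ring
  rw [hsub, hrhs] at key
  linarith

lemma descent_step {E : Type*} [NormedAddCommGroup E] [InnerProductSpace ℝ E]
    [CompleteSpace E] (f : E → ℝ) (g : E → E) (hg : ∀ p, HasGradientAt f (g p) p)
    {L : ℝ} (hL : 0 ≤ L) (hlip : ∀ u v, ‖g u - g v‖ ≤ L * ‖u - v‖)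
    (x : E) {η : ℝ} (hη : 0 < η) (hηL : η * L ≤ 1) :
    f (x - η • g x) ≤ f x - η / 2 * ‖g x‖ ^ 2 := by
  have h := smooth_descent f g hg hL hlip x (x - η • g x)
  rw [sub_sub_cancel_left, inner_neg_right, real_inner_smul_right,
    real_inner_self_eq_norm_sq, norm_neg, norm_smul, Real.norm_eq_abs,
    abs_of_nonneg hη.le, mul_pow] at h
  have hs : (0:ℝ) ≤ ‖g x‖ ^ 2 := sq_nonneg _
  have h2 : (η * L) * (η * ‖g x‖ ^ 2) ≤ 1 * (η * ‖g x‖ ^ 2) :=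
    mul_le_mul_of_nonneg_right hηL (mul_nonneg hη.le hs)
  nlinarith [h2]

section Aux
variable {E : Type*} [NormedAddCommGroup E] [InnerProductSpace ℝ E] [CompleteSpace E]
  {K : ℕ} (J : (Fin (K + 1) → E) → ℝ)

lemma hasFDerivAt_block (hJ : ContDiff ℝ 1 J) (Y : Fin (K + 1) → E) (k : Fin (K + 1)) (x : E) :
    HasFDerivAt (fun u => J (Function.update Y k u))
      ((fderiv ℝ J (Function.update Y k x)).comp
        (ContinuousLinearMap.pi (Pi.single k (ContinuousLinearMap.id ℝ E)))) x :=
  ((hJ.differentiable one_ne_zero) _).hasFDerivAt.comp x (hasFDerivAt_update Y x)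

lemma blockGrad_eq (hJ : ContDiff ℝ 1 J) (Y : Fin (K + 1) → E) (k : Fin (K + 1)) :
    blockGrad J Y k = (InnerProductSpace.toDual ℝ E).symm
      ((fderiv ℝ J Y).comp
        (ContinuousLinearMap.pi (Pi.single k (ContinuousLinearMap.id ℝ E)))) := by
  have h := (hasFDerivAt_block J hJ Y k (Y k)).hasGradientAt
  rw [Function.update_eq_self] at h
  exact h.gradient

lemma blockGrad_continuous (hJ : ContDiff ℝ 1 J) (k : Fin (K + 1)) :
    Continuous fun Y => blockGrad J Y k := by
  simp_rw [blockGrad_eq J hJ]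
  exact (LinearIsometryEquiv.continuous _).comp
    ((hJ.continuous_fderiv one_ne_zero).clm_comp continuous_const)

lemma fderiv_eq_zero_of_blockGrad (hJ : ContDiff ℝ 1 J) (Xbar : Fin (K + 1) → E)
    (h : ∀ k, blockGrad J Xbar k = 0) : fderiv ℝ J Xbar = 0 := by
  have hk : ∀ (k : Fin (K + 1)) (v : E), fderiv ℝ J Xbar (Pi.single k v) = 0 := by
    intro k v
    have h1 := blockGrad_eq J hJ Xbar k
    rw [h k] at h1
    have h2 : (fderiv ℝ J Xbar).comp
        (ContinuousLinearMap.pi (Pi.single k (ContinuousLinearMap.id ℝ E))) = 0 := by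
      simpa using (LinearIsometryEquiv.map_eq_zero_iff _).mp h1.symm
    have h3 := congrArg (fun T => T v) h2
    have h4 : (ContinuousLinearMap.pi (Pi.single k (ContinuousLinearMap.id ℝ E)) :
          E →L[ℝ] (Fin (K + 1) → E)) v = Pi.single k v := by
      funext j
      rcases eq_or_ne j k with rfl | hj
      · simp
      · simp [Pi.single_apply, hj]
    simpa [ContinuousLinearMap.comp_apply, h4] using h3
  ext w
  have : w = ∑ k, Pi.single k (w k) := (Finset.univ_sum_single w).symm
  rw [ContinuousLinearMap.zero_apply, this, map_sum]
  simp [hk]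
end Aux

/-- Part 3 of Proposition 1 (stationarity of limit points): every accumulation point `X̄`
of the backward Gauss–Seidel sweep iterates (i.e. the limit of a convergent subsequence)
is a first-order stationary point of `J`: the total derivative of `J` vanishes at `X̄`. -/
theorem gauss_seidel_accumulation_stationary
    {E : Type*} [NormedAddCommGroup E] [InnerProductSpace ℝ E] [FiniteDimensional ℝ E]
    {K : ℕ} (J : (Fin (K + 1) → E) → ℝ) (hJ : ContDiff ℝ 1 J)
    (hbdd : ∃ B : ℝ, ∀ Y : Fin (K + 1) → E, B ≤ J Y)
    (L η : Fin (K + 1) → ℝ) (hL : ∀ k, 0 < L k)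
    (hLip : ∀ (k : Fin (K + 1)) (Y : Fin (K + 1) → E) (u v : E),
      ‖gradient (fun w => J (Function.update Y k w)) u -
        gradient (fun w => J (Function.update Y k w)) v‖ ≤ L k * ‖u - v‖)
    (hη : ∀ k, 0 < η k ∧ η k ≤ 1 / L k)
    (X : ℕ → Fin (K + 1) → E)
    (hsweep : ∀ (ℓ : ℕ) (k : Fin (K + 1)),
      X (ℓ + 1) k = X ℓ k -
        η k • blockGrad J (fun j => if k < j then X (ℓ + 1) j else X ℓ j) k) :
    ∀ (Xbar : Fin (K + 1) → E) (φ : ℕ → ℕ), StrictMono φ →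
      Tendsto (fun j => X (φ j)) atTop (𝓝 Xbar) →
      fderiv ℝ J Xbar = 0 := by
  intro Xbar φ hφ hconv
  set Z : ℕ → ℕ → Fin (K + 1) → E :=
    fun ℓ m j => if m ≤ (j : ℕ) then X (ℓ + 1) j else X ℓ j with hZ
  set g : ℕ → Fin (K + 1) → E := fun ℓ k => blockGrad J (Z ℓ ((k : ℕ) + 1)) k with hg
  have hZtop : ∀ ℓ m, K + 1 ≤ m → Z ℓ m = X ℓ := by
    intro ℓ m hm
    funext j
    exact if_neg (by omega)
  have hZ0 : ∀ ℓ, Z ℓ 0 = X (ℓ + 1) := by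
    intro ℓ; funext j; exact if_pos (Nat.zero_le _)
  have hZk : ∀ ℓ (k : Fin (K + 1)), Z ℓ ((k : ℕ) + 1) k = X ℓ k := by
    intro ℓ k; exact if_neg (by omega)
  have hupdate : ∀ ℓ (k : Fin (K + 1)),
      Z ℓ (k : ℕ) = Function.update (Z ℓ ((k : ℕ) + 1)) k (X (ℓ + 1) k) := by
    intro ℓ k
    funext j
    rw [Function.update_apply]
    rcases eq_or_ne j k with rfl | hj
    · simp [hZ]
    · have hj' : (j : ℕ) ≠ (k : ℕ) := fun h => hj (Fin.ext h)
      rw [if_neg hj]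
      show (if (k:ℕ) ≤ (j:ℕ) then X (ℓ+1) j else X ℓ j)
        = (if (k:ℕ) + 1 ≤ (j:ℕ) then X (ℓ+1) j else X ℓ j)
      exact if_congr (by omega) rfl rfl
  have hsweep' : ∀ ℓ (k : Fin (K + 1)), X (ℓ + 1) k = X ℓ k - η k • g ℓ k := by
    intro ℓ k
    have harg : (fun j => if k < j then X (ℓ + 1) j else X ℓ j) = Z ℓ ((k:ℕ)+1) := by
      funext j
      show (if k < j then X (ℓ+1) j else X ℓ j)
        = (if (k:ℕ) + 1 ≤ (j:ℕ) then X (ℓ+1) j else X ℓ j)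
      exact if_congr (by rw [Fin.lt_def]; omega) rfl rfl
    rw [hsweep ℓ k, harg]
  -- per-block descent
  have hstep : ∀ ℓ (k : Fin (K + 1)),
      J (Z ℓ (k : ℕ)) ≤ J (Z ℓ ((k : ℕ) + 1)) - η k / 2 * ‖g ℓ k‖ ^ 2 := by
    intro ℓ k
    have hgrad : ∀ p, HasGradientAt (fun u => J (Function.update (Z ℓ ((k:ℕ)+1)) k u))
        (gradient (fun u => J (Function.update (Z ℓ ((k:ℕ)+1)) k u)) p) p := fun p =>
      DifferentiableAt.hasGradientAt (hasFDerivAt_block J hJ _ k p).differentiableAt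
    have hηL : η k * L k ≤ 1 := by
      have h := (hη k).2
      rw [le_div_iff₀ (hL k)] at h
      linarith
    have hd := descent_step _ _ hgrad (hL k).le (hLip k (Z ℓ ((k:ℕ)+1)))
      (X ℓ k) (hη k).1 hηL
    beta_reduce at hd
    have hgk : gradient (fun u => J (Function.update (Z ℓ ((k:ℕ)+1)) k u)) (X ℓ k)
        = g ℓ k := by
      rw [← hZk ℓ k]; rfl
    rw [hgk] at hd
    have h1 : Function.update (Z ℓ ((k:ℕ)+1)) k (X ℓ k) = Z ℓ ((k:ℕ)+1) := by
      conv_lhs => rw [← hZk ℓ k]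
      rw [Function.update_eq_self]
    have h2 : Function.update (Z ℓ ((k:ℕ)+1)) k (X ℓ k - η k • g ℓ k) = Z ℓ (k:ℕ) := by
      rw [← hsweep' ℓ k]
      exact (hupdate ℓ k).symm
    rw [h1, h2] at hd
    exact hd
  have hpos : ∀ ℓ (k : Fin (K + 1)), (0:ℝ) ≤ η k / 2 * ‖g ℓ k‖ ^ 2 := fun ℓ k =>
    mul_nonneg (by linarith [(hη k).1]) (sq_nonneg _)
  have hmono : ∀ ℓ, Monotone fun m => J (Z ℓ m) := by
    intro ℓ
    apply monotone_nat_of_le_succ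
    intro m
    by_cases hm : m ≤ K
    · have h1 := hstep ℓ ⟨m, by omega⟩
      have h2 := hpos ℓ ⟨m, by omega⟩
      simp only [Fin.val_mk] at h1
      linarith
    · rw [hZtop ℓ m (by omega), hZtop ℓ (m + 1) (by omega)]
  have hkey : ∀ ℓ (k : Fin (K + 1)),
      η k / 2 * ‖g ℓ k‖ ^ 2 ≤ J (X ℓ) - J (X (ℓ + 1)) := by
    intro ℓ k
    have h1 : J (X (ℓ + 1)) ≤ J (Z ℓ (k : ℕ)) := by
      rw [← hZ0 ℓ]; exact hmono ℓ (Nat.zero_le _)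
    have h2 : J (Z ℓ ((k : ℕ) + 1)) ≤ J (X ℓ) := by
      rw [← hZtop ℓ (K + 1) le_rfl]; exact hmono ℓ (by omega)
    have h3 := hstep ℓ k
    linarith
  have hanti : Antitone fun ℓ => J (X ℓ) := by
    apply antitone_nat_of_succ_le
    intro ℓ
    have h1 := hkey ℓ 0
    have h2 := hpos ℓ 0
    linarith
  obtain ⟨B, hB⟩ := hbdd
  have hconvJ : Tendsto (fun ℓ => J (X ℓ)) atTop (𝓝 (⨅ ℓ, J (X ℓ))) :=
    tendsto_atTop_ciInf hanti ⟨B, by rintro _ ⟨ℓ, rfl⟩; exact hB _⟩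
  have hdiff0 : Tendsto (fun ℓ => J (X ℓ) - J (X (ℓ + 1))) atTop (𝓝 0) := by
    have h2 : Tendsto (fun ℓ => J (X (ℓ + 1))) atTop (𝓝 (⨅ ℓ, J (X ℓ))) :=
      hconvJ.comp (tendsto_add_atTop_nat 1)
    simpa using hconvJ.sub h2
  have hgnorm : ∀ k, Tendsto (fun ℓ => ‖g ℓ k‖) atTop (𝓝 0) := by
    intro k
    have hsq : Tendsto (fun ℓ => η k / 2 * ‖g ℓ k‖ ^ 2) atTop (𝓝 0) :=
      squeeze_zero (fun ℓ => hpos ℓ k) (fun ℓ => hkey ℓ k) hdiff0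
    have hne : η k ≠ 0 := (hη k).1.ne'
    have hsq2 : Tendsto (fun ℓ => ‖g ℓ k‖ ^ 2) atTop (𝓝 0) := by
      have := hsq.const_mul (2 / η k)
      simp only [mul_zero] at this
      convert this using 2 with ℓ
      field_simp
    have := (Real.continuous_sqrt.tendsto 0).comp hsq2
    simpa [Function.comp_def, Real.sqrt_sq (norm_nonneg _)] using this
  have hg0 : ∀ k, Tendsto (fun ℓ => g ℓ k) atTop (𝓝 0) := fun k =>
    tendsto_zero_iff_norm_tendsto_zero.mpr (hgnorm k)
  have hφtop : Tendsto φ atTop atTop := hφ.tendsto_atTop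
  have hXcomp : ∀ j' : Fin (K + 1),
      Tendsto (fun j => X (φ j) j') atTop (𝓝 (Xbar j')) := fun j' =>
    ((continuous_apply j').tendsto Xbar).comp hconv
  have hX1 : ∀ j' : Fin (K + 1),
      Tendsto (fun j => X (φ j + 1) j') atTop (𝓝 (Xbar j')) := by
    intro j'
    have hb : Tendsto (fun j => g (φ j) j') atTop (𝓝 0) := (hg0 j').comp hφtop
    have heq : (fun j => X (φ j + 1) j') = fun j => X (φ j) j' - η j' • g (φ j) j' :=
      funext fun j => hsweep' (φ j) j'
    rw [heq]
    have := (hXcomp j').sub ((hb.const_smul (η j')))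
    simpa using this
  have hZconv : ∀ k : Fin (K + 1),
      Tendsto (fun j => Z (φ j) ((k : ℕ) + 1)) atTop (𝓝 Xbar) := by
    intro k
    rw [tendsto_pi_nhds]
    intro j'
    show Tendsto (fun j => if (k:ℕ) + 1 ≤ (j':ℕ) then X (φ j + 1) j' else X (φ j) j')
      atTop (𝓝 (Xbar j'))
    by_cases h : (k : ℕ) + 1 ≤ (j' : ℕ)
    · simpa [h] using hX1 j'
    · simpa [h] using hXcomp j'
  have hzero : ∀ k, blockGrad J Xbar k = 0 := by
    intro k
    have hc : Tendsto (fun j => blockGrad J (Z (φ j) ((k : ℕ) + 1)) k) atTop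
        (𝓝 (blockGrad J Xbar k)) :=
      ((blockGrad_continuous J hJ k).tendsto Xbar).comp (hZconv k)
    have hc2 : Tendsto (fun j => g (φ j) k) atTop (𝓝 0) := (hg0 k).comp hφtop
    exact tendsto_nhds_unique hc hc2
  exact fderiv_eq_zero_of_blockGrad J hJ Xbar hzero
end

section
/- Let E be a finite-dimensional real inner product space, K ≥ 0 an integer, J : (Fin (K+1) → E) → ℝ continuously differentiable and bounded below with L_k-Lipschitz partial gradient in each block k (uniformly in the other blocks), and step sizes 0 < η_k ≤ 1/L_k. Let {X^{(ℓ)}}_{ℓ≥0} be the backward Gauss–Seidel sweep iterates, and for each sweep ℓ and block k let X^{(ℓ,k)} = (x_0^{(ℓ−1)}, …, x_k^{(ℓ−1)}, x_{k+1}^{(ℓ)}, …, x_K^{(ℓ)}) denote the pre-update iterate for block k. Then for every k, the partial gradients evaluated along the pre-update iterates vanish: ‖∇_{x_k} J(X^{(ℓ,k)})‖ = ‖x_k^{(ℓ−1)} − x_k^{(ℓ)}‖ / η_k → 0 as ℓ → ∞. -/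
open Filter Topology Function intervalIntegral
open scoped RealInnerProductSpace

lemma descent_lemma {E : Type*} [NormedAddCommGroup E] [InnerProductSpace ℝ E]
    [FiniteDimensional ℝ E] (f : E → ℝ) (hf : ContDiff ℝ 1 f) {L η : ℝ} (hL : 0 < L)
    (hlip : ∀ u v : E, ‖gradient f u - gradient f v‖ ≤ L * ‖u - v‖)
    (hη : 0 < η) (hηL : η ≤ 1 / L) (x : E) :
    f (x - η • gradient f x) + η / 2 * ‖gradient f x‖ ^ 2 ≤ f x := by
  set g := gradient f x with hg
  set d : E := -(η • g) with hd
  have hdiff : ∀ y, DifferentiableAt ℝ f y := fun y => (hf.differentiable one_ne_zero).differentiableAt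
  have hgradcont : Continuous (fun y => gradient f y) := by
    have h1 : Continuous fun y => fderiv ℝ f y := hf.continuous_fderiv one_ne_zero
    exact (InnerProductSpace.toDual ℝ E).symm.continuous.comp h1
  have hcurve : ∀ t : ℝ, HasDerivAt (fun t : ℝ => x + t • d) d t := by
    intro t
    simpa using ((hasDerivAt_id t).smul_const d).const_add x
  have hφ : ∀ t : ℝ, HasDerivAt (fun t => f (x + t • d)) ⟪gradient f (x + t • d), d⟫ t := by
    intro t
    have h1 := ((hdiff (x + t • d)).hasGradientAt.hasFDerivAt).comp_hasDerivAt t (hcurve t)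
    simp [InnerProductSpace.toDual_apply_apply] at h1 ⊢
    exact h1
  have hcontφ' : Continuous fun t : ℝ => ⟪gradient f (x + t • d), d⟫ :=
    ((hgradcont.comp (continuous_const.add (continuous_id.smul continuous_const))).inner continuous_const)
  have hint : IntervalIntegrable (fun t : ℝ => ⟪gradient f (x + t • d), d⟫)
      MeasureTheory.volume 0 1 := hcontφ'.intervalIntegrable 0 1
  have hftc : ∫ t in (0:ℝ)..1, ⟪gradient f (x + t • d), d⟫ = f (x + d) - f x := by
    have := integral_eq_sub_of_hasDerivAt (f := fun t => f (x + t • d))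
      (f' := fun t => ⟪gradient f (x + t • d), d⟫) (fun t _ => hφ t) hint
    simpa using this
  have hbound : ∫ t in (0:ℝ)..1, ⟪gradient f (x + t • d), d⟫ ≤
      ∫ t in (0:ℝ)..1, (⟪g, d⟫ + L * t * ‖d‖ ^ 2) := by
    have hcont2 : Continuous fun t : ℝ => ⟪g, d⟫ + L * t * ‖d‖ ^ 2 :=
      continuous_const.add (((continuous_const.mul continuous_id).mul continuous_const))
    apply integral_mono_on (by norm_num) hint (hcont2.intervalIntegrable 0 1)
    intro t ht
    have key : ⟪gradient f (x + t • d) - g, d⟫ ≤ L * t * ‖d‖ ^ 2 := by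
      calc ⟪gradient f (x + t • d) - g, d⟫ ≤ ‖gradient f (x + t • d) - g‖ * ‖d‖ :=
            real_inner_le_norm _ _
        _ ≤ (L * ‖(x + t • d) - x‖) * ‖d‖ := by
            gcongr; exact hlip _ _
        _ = L * t * ‖d‖ ^ 2 := by
            have : ‖(x + t • d) - x‖ = t * ‖d‖ := by
              simp [norm_smul, abs_of_nonneg ht.1]
            rw [this]; ring
    have hsub := inner_sub_left (𝕜 := ℝ) (gradient f (x + t • d)) g d
    linarith [key, hsub.symm]
  have hintval : ∫ t in (0:ℝ)..1, (⟪g, d⟫ + L * t * ‖d‖ ^ 2) =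
      ⟪g, d⟫ + L / 2 * ‖d‖ ^ 2 := by
    have h2 : IntervalIntegrable (fun t : ℝ => L * t * ‖d‖ ^ 2) MeasureTheory.volume 0 1 :=
      Continuous.intervalIntegrable (by fun_prop) 0 1
    rw [integral_add intervalIntegrable_const h2]
    have heq : (fun t : ℝ => L * t * ‖d‖ ^ 2) = fun t : ℝ => (L * ‖d‖ ^ 2) * t := by
      funext t; ring
    rw [heq, integral_const_mul, integral_id]
    simp
    ring
  have hgd : ⟪g, d⟫ = -(η * ‖g‖ ^ 2) := by
    rw [hd, inner_neg_right, real_inner_smul_right, real_inner_self_eq_norm_sq]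
  have hnd : ‖d‖ ^ 2 = η ^ 2 * ‖g‖ ^ 2 := by
    rw [hd, norm_neg, norm_smul, mul_pow]
    simp [abs_of_nonneg hη.le]
  have hLη : L * η ≤ 1 := by
    rw [le_div_iff₀ hL] at hηL; linarith [hηL]
  have hfinal : f (x + d) - f x ≤ -(η * ‖g‖ ^ 2) + L / 2 * (η ^ 2 * ‖g‖ ^ 2) := by
    rw [← hftc, ← hgd, ← hnd]
    calc _ ≤ _ := hbound
      _ = _ := hintval
  have hxd : x + d = x - η • g := by rw [hd]; abel
  have hsq : 0 ≤ ‖g‖ ^ 2 := sq_nonneg _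
  have : L / 2 * (η ^ 2 * ‖g‖ ^ 2) ≤ η / 2 * ‖g‖ ^ 2 := by
    have : L * η * (η * ‖g‖ ^ 2) ≤ 1 * (η * ‖g‖ ^ 2) := by
      apply mul_le_mul_of_nonneg_right hLη (by positivity)
    nlinarith
  rw [hxd] at hfinal
  linarith

/-- Key intermediate claim in Step 3 of the proof of Proposition 1: along the pre-update
iterates `X^{(ℓ,k)} = (x_0^{(ℓ)}, …, x_k^{(ℓ)}, x_{k+1}^{(ℓ+1)}, …, x_K^{(ℓ+1)})`, the
partial gradient of block `k` equals `‖x_k^{(ℓ)} - x_k^{(ℓ+1)}‖ / η_k` in norm, and this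
quantity tends to `0` as `ℓ → ∞`. -/
theorem gauss_seidel_partial_gradients_vanish
    {E : Type*} [NormedAddCommGroup E] [InnerProductSpace ℝ E] [FiniteDimensional ℝ E]
    {K : ℕ} (J : (Fin (K + 1) → E) → ℝ) (hJ : ContDiff ℝ 1 J)
    (hbdd : ∃ B : ℝ, ∀ Y : Fin (K + 1) → E, B ≤ J Y)
    (L η : Fin (K + 1) → ℝ) (hL : ∀ k, 0 < L k)
    (hLip : ∀ (k : Fin (K + 1)) (Y : Fin (K + 1) → E) (u v : E),
      ‖gradient (fun w => J (Function.update Y k w)) u -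
        gradient (fun w => J (Function.update Y k w)) v‖ ≤ L k * ‖u - v‖)
    (hη : ∀ k, 0 < η k ∧ η k ≤ 1 / L k)
    (X : ℕ → Fin (K + 1) → E)
    (hsweep : ∀ (ℓ : ℕ) (k : Fin (K + 1)),
      X (ℓ + 1) k = X ℓ k -
        η k • blockGrad J (fun j => if k < j then X (ℓ + 1) j else X ℓ j) k) :
    ∀ k : Fin (K + 1),
      (∀ ℓ : ℕ,
        ‖blockGrad J (fun j => if k < j then X (ℓ + 1) j else X ℓ j) k‖ =
          ‖X ℓ k - X (ℓ + 1) k‖ / η k) ∧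
      Tendsto
        (fun ℓ : ℕ => ‖blockGrad J (fun j => if k < j then X (ℓ + 1) j else X ℓ j) k‖)
        atTop (𝓝 0) := by
  -- notation
  set Y : ℕ → Fin (K + 1) → Fin (K + 1) → E :=
    fun ℓ k j => if k < j then X (ℓ + 1) j else X ℓ j with hY
  set g : ℕ → Fin (K + 1) → E := fun ℓ k => blockGrad J (Y ℓ k) k with hgdef
  -- intermediate states
  set T : ℕ → ℕ → Fin (K + 1) → E :=
    fun ℓ m j => if m ≤ (j : ℕ) then X (ℓ + 1) j else X ℓ j with hT
  have hT0 : ∀ ℓ, T ℓ 0 = X (ℓ + 1) := by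
    intro ℓ; funext j; simp [hT]
  have hTtop : ∀ ℓ m, K + 1 ≤ m → T ℓ m = X ℓ := by
    intro ℓ m hm; funext j
    have hj := j.isLt
    have : ¬ m ≤ (j : ℕ) := by omega
    simp [hT, this]
  have hYT : ∀ ℓ (k : Fin (K + 1)), Y ℓ k = T ℓ ((k : ℕ) + 1) := by
    intro ℓ k; funext j
    simp only [hY, hT, Fin.lt_def, Nat.add_one_le_iff]
  have hYk : ∀ ℓ (k : Fin (K + 1)), Y ℓ k k = X ℓ k := by
    intro ℓ k; simp [hY]
  have hupd : ∀ ℓ (k : Fin (K + 1)),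
      Function.update (Y ℓ k) k (X (ℓ + 1) k) = T ℓ (k : ℕ) := by
    intro ℓ k; funext j
    rcases eq_or_ne j k with rfl | hjk
    · simp [hT]
    · have hne : (j : ℕ) ≠ (k : ℕ) := fun h => hjk (Fin.ext h)
      rw [Function.update_of_ne hjk]
      show (if k < j then X (ℓ + 1) j else X ℓ j) =
        (if (k : ℕ) ≤ (j : ℕ) then X (ℓ + 1) j else X ℓ j)
      by_cases h : k < j
      · rw [if_pos h, if_pos (le_of_lt (Fin.lt_def.mp h))]
      · have h3 : ¬ (k : ℕ) ≤ (j : ℕ) := by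
          rw [Fin.lt_def] at h; omega
        rw [if_neg h, if_neg h3]
  -- single block descent
  have hstep : ∀ ℓ (k : Fin (K + 1)),
      J (T ℓ (k : ℕ)) + η k / 2 * ‖g ℓ k‖ ^ 2 ≤ J (T ℓ ((k : ℕ) + 1)) := by
    intro ℓ k
    have hfC : ContDiff ℝ 1 (fun u => J (Function.update (Y ℓ k) k u)) :=
      hJ.comp (contDiff_update 1 (Y ℓ k) k)
    have hdes := descent_lemma (fun u => J (Function.update (Y ℓ k) k u)) hfC (hL k)
      (hLip k (Y ℓ k)) (hη k).1 (hη k).2 (X ℓ k)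
    have hgrad : gradient (fun u => J (Function.update (Y ℓ k) k u)) (X ℓ k) = g ℓ k := by
      have h0 : g ℓ k = gradient (fun u => J (Function.update (Y ℓ k) k u)) (Y ℓ k k) := rfl
      rw [h0, hYk]
    rw [hgrad] at hdes
    have h1 : X ℓ k - η k • g ℓ k = X (ℓ + 1) k := (hsweep ℓ k).symm
    rw [h1, hupd] at hdes
    have h2 : Function.update (Y ℓ k) k (X ℓ k) = Y ℓ k := by
      rw [← hYk ℓ k]; exact Function.update_eq_self _ _
    rw [h2, hYT] at hdes
    exact hdes
  -- monotonicity of J along intermediate states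
  have hmono : ∀ ℓ, Monotone (fun m => J (T ℓ m)) := by
    intro ℓ
    apply monotone_nat_of_le_succ
    intro m
    by_cases hm : m ≤ K
    · have := hstep ℓ ⟨m, by omega⟩
      have hpos : 0 ≤ η ⟨m, by omega⟩ / 2 * ‖g ℓ ⟨m, by omega⟩‖ ^ 2 := by
        have := (hη ⟨m, by omega⟩).1; positivity
      simp only at this
      linarith
    · rw [hTtop ℓ m (by omega), hTtop ℓ (m + 1) (by omega)]
  have hdec : ∀ ℓ, J (X (ℓ + 1)) ≤ J (X ℓ) := by
    intro ℓ
    have h : J (T ℓ 0) ≤ J (T ℓ (K + 1)) := hmono ℓ (Nat.zero_le (K + 1))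
    rwa [hT0, hTtop ℓ (K + 1) le_rfl] at h
  have hanti : Antitone (fun ℓ => J (X ℓ)) :=
    antitone_nat_of_succ_le hdec
  obtain ⟨B, hB⟩ := hbdd
  have hbdd' : BddBelow (Set.range fun ℓ => J (X ℓ)) :=
    ⟨B, by rintro _ ⟨ℓ, rfl⟩; exact hB _⟩
  have hconv : Tendsto (fun ℓ => J (X ℓ)) atTop (𝓝 (⨅ ℓ, J (X ℓ))) :=
    tendsto_atTop_ciInf hanti hbdd'
  have hconv' : Tendsto (fun ℓ => J (X (ℓ + 1))) atTop (𝓝 (⨅ ℓ, J (X ℓ))) :=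
    hconv.comp (tendsto_add_atTop_nat 1)
  have hdiff0 : Tendsto (fun ℓ => J (X ℓ) - J (X (ℓ + 1))) atTop (𝓝 0) := by
    simpa using hconv.sub hconv'
  intro k
  have hηk := (hη k).1
  constructor
  · intro ℓ
    have h1 : X ℓ k - X (ℓ + 1) k = η k • g ℓ k := by
      rw [hsweep ℓ k]; abel
    rw [h1, norm_smul, Real.norm_eq_abs, abs_of_pos hηk]
    field_simp
    rfl
  · -- squeeze
    have hkey : ∀ ℓ, η k / 2 * ‖g ℓ k‖ ^ 2 ≤ J (X ℓ) - J (X (ℓ + 1)) := by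
      intro ℓ
      have h1 := hstep ℓ k
      have h2 : J (T ℓ ((k : ℕ) + 1)) ≤ J (T ℓ (K + 1)) := hmono ℓ (by omega)
      have h3 : J (T ℓ 0) ≤ J (T ℓ (k : ℕ)) := hmono ℓ (Nat.zero_le _)
      rw [hTtop ℓ (K + 1) le_rfl] at h2
      rw [hT0] at h3
      linarith
    have hsq : Tendsto (fun ℓ => η k / 2 * ‖g ℓ k‖ ^ 2) atTop (𝓝 0) := by
      apply squeeze_zero (fun ℓ => by positivity) hkey hdiff0
    have hsq2 : Tendsto (fun ℓ => ‖g ℓ k‖ ^ 2) atTop (𝓝 0) := by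
      have := hsq.const_mul (2 / η k)
      rw [mul_zero] at this
      convert this using 2 with ℓ
      field_simp
    have : Tendsto (fun ℓ => Real.sqrt (‖g ℓ k‖ ^ 2)) atTop (𝓝 0) := by
      have h0 : Real.sqrt 0 = 0 := Real.sqrt_zero
      exact h0 ▸ (Real.continuous_sqrt.tendsto 0).comp hsq2
    simpa [Real.sqrt_sq (norm_nonneg _)] using this
end
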